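/- arXiv:math/0206311 — 6 statements merged into one kernel-verified Lean document; each statement's English description precedes it below -/
import Mathlib

section
/- Let q0 = 2^s with s ≥ 1 and q = 2·q0². For any nonzero b in F_q, the automorphisms of the function field F_q(x,y) with x^{q0}(x^q + x) = t^q + t, obtained by setting y = b^{-1}(x^{2q0+1} + t^{2q0}), satisfy: F_q(x,t) = F_q(x,y) and x^{2q0}(x^q + x) = b(y^q + y). In particular, the Deligne–Lusztig curve of Suzuki type with standard equation X^{q0}(X^q+X)=T^q+T is birationally equivalent over F_q to the plane curve X^{2q0}(X^q+X) = b(Y^q+Y). -/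
/-- For `q₀ = 2^s`, `q = 2q₀²` and any nonzero `b ∈ F_q`, if
`x^{q₀}(x^q + x) = t^q + t` in an extension `L` of `F_q` and
`y = b⁻¹(x^{2q₀+1} + t^{2q₀})`, then `x^{2q₀}(x^q + x) = b(y^q + y)` and
`F_q(x,t) = F_q(x,y)`. -/
theorem stmt_0 (s : ℕ) (hs : 1 ≤ s) (q0 q : ℕ) (hq0 : q0 = 2 ^ s) (hq : q = 2 * q0 ^ 2)
    (L : Type*) [Field L] [Algebra (GaloisField 2 (2 * s + 1)) L]
    (b : GaloisField 2 (2 * s + 1)) (hb : b ≠ 0)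
    (x t : L) (hxt : x ^ q0 * (x ^ q + x) = t ^ q + t)
    (y : L)
    (hy : y = (algebraMap (GaloisField 2 (2 * s + 1)) L b)⁻¹ * (x ^ (2 * q0 + 1) + t ^ (2 * q0))) :
    x ^ (2 * q0) * (x ^ q + x) = algebraMap (GaloisField 2 (2 * s + 1)) L b * (y ^ q + y) ∧
    IntermediateField.adjoin (GaloisField 2 (2 * s + 1)) {x, t} =
      IntermediateField.adjoin (GaloisField 2 (2 * s + 1)) {x, y} := by
  subst hq
  haveI : CharP L 2 := charP_of_injective_algebraMap
    (algebraMap (GaloisField 2 (2 * s + 1)) L).injective 2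
  set β := algebraMap (GaloisField 2 (2 * s + 1)) L b with hβdef
  have hβ : β ≠ 0 := by
    rw [hβdef]
    exact (map_ne_zero (algebraMap (GaloisField 2 (2 * s + 1)) L)).mpr hb
  have h2L : (2 : L) = 0 := CharTwo.two_eq_zero
  have hq' : 2 * q0 ^ 2 = 2 ^ (2 * s + 1) := by
    rw [hq0, ← pow_mul, show 2 * s + 1 = s * 2 + 1 by omega, pow_succ]
    ring
  have h2q0 : 2 * q0 = 2 ^ (s + 1) := by rw [hq0, pow_succ]; ring
  have hβq : β ^ (2 * q0 ^ 2) = β := by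
    rw [hβdef, ← map_pow]
    congr 1
    haveI : Fintype (GaloisField 2 (2 * s + 1)) := Fintype.ofFinite _
    have hcard : Fintype.card (GaloisField 2 (2 * s + 1)) = 2 ^ (2 * s + 1) := by
      rw [← Nat.card_eq_fintype_card]
      exact GaloisField.card 2 (2 * s + 1) (by omega)
    rw [hq', ← hcard, FiniteField.pow_card]
  have fq : ∀ a c : L, (a + c) ^ (2 * q0 ^ 2) = a ^ (2 * q0 ^ 2) + c ^ (2 * q0 ^ 2) := by
    intro a c
    rw [hq', add_pow_char_pow]
  have f2q0 : ∀ a c : L, (a + c) ^ (2 * q0) = a ^ (2 * q0) + c ^ (2 * q0) := by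
    intro a c
    rw [h2q0, add_pow_char_pow]
  -- the key raised equation
  have hxt2 : (t ^ (2 * q0 ^ 2)) ^ (2 * q0) + t ^ (2 * q0)
      = (x ^ q0) ^ (2 * q0) * ((x ^ (2 * q0 ^ 2)) ^ (2 * q0) + x ^ (2 * q0)) := by
    rw [← f2q0, ← f2q0, ← hxt, mul_pow]
  -- β * y
  have hβy : β * y = x ^ (2 * q0 + 1) + t ^ (2 * q0) := by
    rw [hy, ← mul_assoc, mul_inv_cancel₀ hβ, one_mul]
  -- Part 1
  have part1 : x ^ (2 * q0) * (x ^ (2 * q0 ^ 2) + x) = β * (y ^ (2 * q0 ^ 2) + y) := by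
    have hyq : β * y ^ (2 * q0 ^ 2)
        = (x ^ (2 * q0 + 1)) ^ (2 * q0 ^ 2) + (t ^ (2 * q0)) ^ (2 * q0 ^ 2) := by
      have h := congrArg (· ^ (2 * q0 ^ 2)) hβy
      simp only [mul_pow, hβq, fq] at h
      exact h
    have expand : β * (y ^ (2 * q0 ^ 2) + y)
        = (x ^ (2 * q0 + 1)) ^ (2 * q0 ^ 2) + (t ^ (2 * q0)) ^ (2 * q0 ^ 2)
          + (x ^ (2 * q0 + 1) + t ^ (2 * q0)) := by
      rw [mul_add, hyq, hβy]
    have hpow : (t ^ (2 * q0)) ^ (2 * q0 ^ 2) = (t ^ (2 * q0 ^ 2)) ^ (2 * q0) := by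
      rw [← pow_mul, ← pow_mul, mul_comm]
    rw [expand, hpow]
    linear_combination (-1 : L) * hxt2 - x ^ (4 * q0 ^ 3 + 2 * q0 ^ 2) * h2L
  refine ⟨part1, ?_⟩
  -- recover t from x and y
  have h1 : β * y + x ^ (2 * q0 + 1) = t ^ (2 * q0) := by
    linear_combination hβy + x ^ (2 * q0 + 1) * h2L
  have ht : t = (β * y + x ^ (2 * q0 + 1)) ^ q0 + x ^ q0 * (x ^ (2 * q0 ^ 2) + x) := by
    rw [h1]
    linear_combination (-1 : L) * hxt - t ^ (2 * q0 ^ 2) * h2L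
  apply le_antisymm
  · rw [IntermediateField.adjoin_le_iff]
    rintro z hz
    rcases hz with rfl | hz
    · exact IntermediateField.subset_adjoin _ _ (Set.mem_insert _ _)
    · rw [Set.mem_singleton_iff] at hz
      subst hz
      have hxmem : x ∈ IntermediateField.adjoin (GaloisField 2 (2 * s + 1)) {x, y} :=
        IntermediateField.subset_adjoin _ _ (Set.mem_insert _ _)
      have hymem : y ∈ IntermediateField.adjoin (GaloisField 2 (2 * s + 1)) {x, y} :=
        IntermediateField.subset_adjoin _ _ (Set.mem_insert_of_mem _ rfl)
      rw [ht]
      exact add_mem (pow_mem (add_mem (mul_mem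
          ((IntermediateField.adjoin (GaloisField 2 (2 * s + 1)) {x, y}).algebraMap_mem b) hymem)
          (pow_mem hxmem _)) _)
        (mul_mem (pow_mem hxmem _) (add_mem (pow_mem hxmem _) hxmem))
  · rw [IntermediateField.adjoin_le_iff]
    rintro z hz
    rcases hz with rfl | hz
    · exact IntermediateField.subset_adjoin _ _ (Set.mem_insert _ _)
    · rw [Set.mem_singleton_iff] at hz
      subst hz
      have hxmem : x ∈ IntermediateField.adjoin (GaloisField 2 (2 * s + 1)) {x, t} :=
        IntermediateField.subset_adjoin _ _ (Set.mem_insert _ _)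
      have htmem : t ∈ IntermediateField.adjoin (GaloisField 2 (2 * s + 1)) {x, t} :=
        IntermediateField.subset_adjoin _ _ (Set.mem_insert_of_mem _ rfl)
      rw [hy, ← map_inv₀]
      exact mul_mem
        ((IntermediateField.adjoin (GaloisField 2 (2 * s + 1)) {x, t}).algebraMap_mem b⁻¹)
        (add_mem (pow_mem hxmem _) (pow_mem htmem _))
end

section
/- Let q0 = 2^s, q = 2q0², and define H(T) = T·(1 + Σ_{i=0}^{s-1} T^{2^i(2q0+1)-(q0+1)}(1+T)^{2^i}) ∈ F_2[T]. Then H has degree q/2, and for every a ∈ F_q of trace 0, the element a^{2q0-1} is a root of H. -/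
/-!
Write `b = a ^ (2q₀ - 1)`. Since `a ^ q = a`, the exponents `(2q₀ - 1)(2q₀ + 1)` and
`(2q₀ - 1)(q₀ + 1)` reduce to `1` and `q₀`, so `b ^ (2q₀ + 1) = a` and `b ^ (q₀ + 1) = a ^ q₀`.
Multiplying `G⁻(b)` by `b ^ (q₀ + 1)` turns its `i`-th term into `(a + a ^ (2q₀)) ^ (2 ^ i)`, and in
characteristic `2` the sum of these over `i < s` is the trace of `a` minus `a ^ q₀`. Hence
`b ^ (q₀ + 1) G⁻(b) = a ^ q₀ + a ^ q₀ = 0` when `a` has trace zero. The degree count is an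
induction on `s`: each new term of `G⁻` is monic and of larger degree than the previous sum.
-/

open Polynomial Finset

/-- `G⁻` of the paper, with `q0` kept independent of `s`. -/
noncomputable def gMinus (R : Type*) [Semiring R] (q0 s : ℕ) : R[X] :=
  1 + ∑ i ∈ range s, X ^ (2 ^ i * (2 * q0 + 1) - (q0 + 1)) * (1 + X) ^ 2 ^ i

theorem monic_one_add_X {R : Type*} [Semiring R] : (1 + X : R[X]).Monic := by
  simpa [add_comm] using monic_X_add_C (1 : R)

section Degree

variable {R : Type*} [Semiring R] [Nontrivial R]

theorem natDegree_one_add_X : (1 + X : R[X]).natDegree = 1 := by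
  simpa [add_comm] using natDegree_X_add_C (1 : R)

theorem natDegree_gMinus_term (q0 i : ℕ) :
    (X ^ (2 ^ i * (2 * q0 + 1) - (q0 + 1)) * (1 + X) ^ 2 ^ i : R[X]).natDegree
      = (2 ^ (i + 1) - 1) * (q0 + 1) := by
  rw [(monic_X_pow _).natDegree_mul (monic_one_add_X.pow _), natDegree_X_pow,
    monic_one_add_X.natDegree_pow, natDegree_one_add_X]
  have : q0 + 1 ≤ 2 ^ i * (2 * q0 + 1) :=
    le_trans (by omega) (Nat.le_mul_of_pos_left _ (Nat.two_pow_pos i))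
  zify [this, Nat.one_le_two_pow (n := i + 1)]
  ring

theorem gMinus_monic_and_natDegree (q0 s : ℕ) :
    (gMinus R q0 s).Monic ∧ (gMinus R q0 s).natDegree = (2 ^ s - 1) * (q0 + 1) := by
  induction s with
  | zero => simp [gMinus]
  | succ n ih =>
    have hterm := natDegree_gMinus_term (R := R) q0 n
    have hlt : (gMinus R q0 n).natDegree <
        (X ^ (2 ^ n * (2 * q0 + 1) - (q0 + 1)) * (1 + X) ^ 2 ^ n : R[X]).natDegree := by
      rw [ih.2, hterm]
      exact Nat.mul_lt_mul_of_pos_right (by have := Nat.one_le_two_pow (n := n); omega)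
        (Nat.succ_pos q0)
    have hsucc : gMinus R q0 (n + 1)
        = gMinus R q0 n + X ^ (2 ^ n * (2 * q0 + 1) - (q0 + 1)) * (1 + X) ^ 2 ^ n := by
      rw [gMinus, gMinus, sum_range_succ, add_assoc]
    rw [hsucc, natDegree_add_eq_right_of_natDegree_lt hlt, hterm]
    exact ⟨((monic_X_pow _).mul (monic_one_add_X.pow _)).add_of_right (degree_lt_degree hlt), rfl⟩

end Degree

theorem aeval_gMinus {R A : Type*} [CommSemiring R] [CommSemiring A] [Algebra R A]
    (b : A) (q0 s : ℕ) : aeval b (gMinus R q0 s) = eval b (gMinus A q0 s) := by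
  simp [gMinus, eval_finsetSum]

section Frobenius

variable {M : Type*} [Monoid M] {a : M} {q0 : ℕ}

theorem pow_add_eq_pow_succ_of_pow_eq_self {n : ℕ} (h : a ^ n = a) (k : ℕ) :
    a ^ (n + k) = a ^ (k + 1) := by
  rw [pow_add, h, pow_succ']

theorem pow_two_mul_sub_one_pow_two_mul_add_one (hq0 : 1 ≤ q0) (ha : a ^ (2 * q0 ^ 2) = a) :
    (a ^ (2 * q0 - 1)) ^ (2 * q0 + 1) = a := by
  have hsq : 1 ≤ 2 * q0 ^ 2 := by have := Nat.one_le_pow 2 q0 hq0; omega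
  have : (2 * q0 - 1) * (2 * q0 + 1) = 2 * q0 ^ 2 + (2 * q0 ^ 2 - 1) := by
    zify [hsq, show 1 ≤ 2 * q0 by omega]
    ring
  rw [← pow_mul, this, pow_add_eq_pow_succ_of_pow_eq_self ha, Nat.sub_add_cancel hsq, ha]

theorem pow_two_mul_sub_one_pow_add_one (hq0 : 1 ≤ q0) (ha : a ^ (2 * q0 ^ 2) = a) :
    (a ^ (2 * q0 - 1)) ^ (q0 + 1) = a ^ q0 := by
  have : (2 * q0 - 1) * (q0 + 1) = 2 * q0 ^ 2 + (q0 - 1) := by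
    zify [hq0, show 1 ≤ 2 * q0 by omega]
    ring
  rw [← pow_mul, this, pow_add_eq_pow_succ_of_pow_eq_self ha, Nat.sub_add_cancel hq0]

end Frobenius

theorem sum_range_add_pow_two_pow_pow_eq {R : Type*} [CommRing R] [CharP R 2] {s : ℕ} {a : R}
    (ha : ∑ i ∈ range (2 * s + 1), a ^ 2 ^ i = 0) :
    ∑ i ∈ range s, (a + a ^ 2 ^ (s + 1)) ^ 2 ^ i = a ^ 2 ^ s := by
  simp only [add_pow_char_pow, ← pow_mul, ← pow_add, sum_add_distrib]
  rw [show 2 * s + 1 = s + 1 + s by omega, sum_range_add, sum_range_succ] at ha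
  linear_combination ha - CharTwo.add_self_eq_zero (a ^ 2 ^ s)

theorem pow_add_one_mul_gMinus_term {R : Type*} [CommSemiring R] (b : R) (q0 i : ℕ) :
    b ^ (q0 + 1) * (b ^ (2 ^ i * (2 * q0 + 1) - (q0 + 1)) * (1 + b) ^ 2 ^ i)
      = (b ^ (2 * q0 + 1) * (1 + b)) ^ 2 ^ i := by
  have : q0 + 1 ≤ 2 ^ i * (2 * q0 + 1) :=
    le_trans (by omega) (Nat.le_mul_of_pos_left _ (Nat.two_pow_pos i))
  rw [← mul_assoc, ← pow_add, Nat.add_sub_cancel' this, mul_comm (2 ^ i), pow_mul, mul_pow]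

theorem mul_eval_gMinus_eq_zero {R : Type*} [CommRing R] [NoZeroDivisors R] [CharP R 2]
    {s q0 : ℕ} (hq0 : q0 = 2 ^ s) {a b : R} (hba : b ^ (2 * q0 + 1) = a)
    (hbq0 : b ^ (q0 + 1) = a ^ q0) (htr : ∑ i ∈ range (2 * s + 1), a ^ 2 ^ i = 0) :
    b * eval b (gMinus R q0 s) = 0 := by
  have hab : b ^ (2 * q0 + 1) * (1 + b) = a + a ^ 2 ^ (s + 1) := by
    rw [mul_add, mul_one, ← pow_succ, hba, show 2 * q0 + 1 + 1 = (q0 + 1) * 2 by ring, pow_mul,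
      hbq0, ← pow_mul, hq0, pow_succ]
  have key : b ^ (q0 + 1) * eval b (gMinus R q0 s) = 0 := by
    simp only [gMinus, eval_add, eval_one, eval_finsetSum, eval_mul, eval_pow, eval_X]
    rw [mul_add, mul_one, mul_sum]
    simp only [pow_add_one_mul_gMinus_term, hab]
    rw [sum_range_add_pow_two_pow_pow_eq htr, hbq0, hq0]
    exact CharTwo.add_self_eq_zero _
  rcases mul_eq_zero.mp key with hb | hG
  · rw [pow_eq_zero_iff (Nat.succ_ne_zero q0)] at hb
    rw [hb, zero_mul]
  · rw [hG, mul_zero]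

theorem stmt_2_general (s : ℕ) (q0 q : ℕ) (hq0 : q0 = 2 ^ s) (hq : q = 2 * q0 ^ 2)
    (H : Polynomial (ZMod 2))
    (hH : H = X * (1 + ∑ i ∈ Finset.range s,
      X ^ (2 ^ i * (2 * q0 + 1) - (q0 + 1)) * (1 + X) ^ (2 ^ i)))
    (F : Type*) [Field F] [Fintype F] [Algebra (ZMod 2) F]
    (hF : Fintype.card F = q) :
    H.natDegree = q / 2 ∧
    ∀ a : F, (∑ i ∈ Finset.range (2 * s + 1), a ^ (2 ^ i)) = 0 →
      Polynomial.aeval (a ^ (2 * q0 - 1)) H = 0 := by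
  replace hH : H = X * gMinus (ZMod 2) q0 s := hH
  have hq0_pos : 1 ≤ q0 := hq0 ▸ Nat.one_le_two_pow
  constructor
  · obtain ⟨hmonic, hdeg⟩ := gMinus_monic_and_natDegree (R := ZMod 2) q0 s
    rw [hH, natDegree_X_mul hmonic.ne_zero, hdeg, ← hq0, hq,
      Nat.mul_div_cancel_left _ two_pos]
    obtain ⟨p, rfl⟩ : ∃ p, q0 = p + 1 := ⟨q0 - 1, by omega⟩
    simp only [Nat.add_sub_cancel]
    ring
  · intro a htr
    have : CharP F 2 := charP_of_injective_algebraMap (algebraMap (ZMod 2) F).injective 2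
    have hfrob : a ^ (2 * q0 ^ 2) = a := hq ▸ hF ▸ FiniteField.pow_card a
    rw [hH, map_mul, aeval_X, aeval_gMinus]
    exact mul_eval_gMinus_eq_zero hq0 (pow_two_mul_sub_one_pow_two_mul_add_one hq0_pos hfrob)
      (pow_two_mul_sub_one_pow_add_one hq0_pos hfrob) htr

/-- With `q₀ = 2^s`, `q = 2q₀²`, the polynomial
`H(T) = T(1 + Σ_{i=0}^{s-1} T^{2^i(2q₀+1)-(q₀+1)}(1+T)^{2^i}) ∈ F₂[T]` has degree `q/2`,
and for every `a ∈ F_q` of trace `0` the element `a^{2q₀-1}` is a root of `H`. -/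
theorem stmt_2 (s : ℕ) (hs : 1 ≤ s) (q0 q : ℕ) (hq0 : q0 = 2 ^ s) (hq : q = 2 * q0 ^ 2)
    (H : Polynomial (ZMod 2))
    (hH : H = X * (1 + ∑ i ∈ Finset.range s,
      X ^ (2 ^ i * (2 * q0 + 1) - (q0 + 1)) * (1 + X) ^ (2 ^ i)))
    (F : Type*) [Field F] [Fintype F] [Algebra (ZMod 2) F]
    (hF : Fintype.card F = q) :
    H.natDegree = q / 2 ∧
    ∀ a : F, (∑ i ∈ Finset.range (2 * s + 1), a ^ (2 ^ i)) = 0 →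
      Polynomial.aeval (a ^ (2 * q0 - 1)) H = 0 :=
  stmt_2_general s q0 q hq0 hq H hH F hF
end

section
/- Let q0 = 2^s, q = 2q0², and define G⁺(T) = 1 + Σ_{i=0}^{s-1} T^{2^i q0}(1+T)^{2^i(q0+1)-q0} + T^{q/2} ∈ F_2[T]. Then for every a ∈ F_q of trace 1, the element a^{2q0-1} is a root of G⁺. -/
/-!
Put `b = a^{2q₀-1}`, `v = a^{q₀}`, `c = a(1 + b) = a + v²`, `g = b^{q₀}` and `r = a^{q₀²}`.
From `a^q = a` one gets `gv = a`, `r² = a`, `g^{q₀} r = v` and, `q₀` being a power of the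
characteristic, `c^{q₀} = v + a`. These give `c^{q₀+1} g = va(a + v + g + g²)`, so that
`c^{q₀}` times the `i`-th summand of `G⁺(b)` is `v t^{2^i}` with `t = a + v + g + g²`.
Squaring is additive, so `∑_{i<s} t^{2^i}` telescopes to `Tr'(a) + g + g^{q₀}`, where
`Tr'(a) = ∑_{i<2s} a^{2^i} = 1 + r` by the trace condition. Altogether
`c^{q₀} G⁺(b) = a g^{q₀} + vr`, and both terms equal `r² g^{q₀} = rv`.
The case `c = 0` is `b = 1`, where `G⁺(1) = 1 + 1`.
-/

open Finset Polynomial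

section CharTwo

variable {R : Type*} [CommRing R] [CharP R 2]

theorem sum_range_pow_two_pow_add_pow_two_pow_succ (x : R) (n : ℕ) :
    ∑ i ∈ range n, (x ^ 2 ^ i + x ^ 2 ^ (i + 1)) = x + x ^ 2 ^ n := by
  simp_rw [← CharTwo.sub_eq_add]
  rw [sum_range_sub' (fun i ↦ x ^ 2 ^ i), pow_zero, pow_one]

theorem sum_range_add_pow_two_pow_add_sq (x y : R) (s : ℕ) :
    ∑ i ∈ range s, (x + x ^ 2 ^ s + (y + y ^ 2)) ^ 2 ^ i =
      ∑ i ∈ range (2 * s), x ^ 2 ^ i + (y + y ^ 2 ^ s) := by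
  have hterm (i : ℕ) : (x + x ^ 2 ^ s + (y + y ^ 2)) ^ 2 ^ i =
      x ^ 2 ^ i + x ^ 2 ^ (s + i) + (y ^ 2 ^ i + y ^ 2 ^ (i + 1)) := by
    simp only [add_pow_char_pow, ← pow_mul, ← pow_add]
    ring
  rw [sum_congr rfl fun i _ ↦ hterm i, sum_add_distrib, sum_add_distrib,
    sum_range_pow_two_pow_add_pow_two_pow_succ, two_mul, sum_range_add]

theorem sum_range_pow_two_pow_of_one_add_sum_eq_zero {x : R} {n : ℕ}
    (h : 1 + ∑ i ∈ range (n + 1), x ^ 2 ^ i = 0) :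
    ∑ i ∈ range n, x ^ 2 ^ i = 1 + x ^ 2 ^ n := by
  rw [sum_range_succ] at h
  linear_combination h - (1 + x ^ 2 ^ n) * CharTwo.two_eq_zero (R := R)

end CharTwo

/-- The value `G⁺(x)`, with `q₀²` in place of `q/2`. -/
def gPlusEval {R : Type*} [CommRing R] (s q0 : ℕ) (x : R) : R :=
  1 + ∑ i ∈ range s, x ^ (2 ^ i * q0) * (1 + x) ^ (2 ^ i * (q0 + 1) - q0) + x ^ (q0 ^ 2)

theorem gPlusEval_one {R : Type*} [CommRing R] [CharP R 2] (s q0 : ℕ) :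
    gPlusEval s q0 (1 : R) = 0 := by
  have hsummand : ∀ i ∈ range s,
      (1 : R) ^ (2 ^ i * q0) * (1 + 1) ^ (2 ^ i * (q0 + 1) - q0) = 0 := by
    intro i _
    have : q0 + 1 ≤ 2 ^ i * (q0 + 1) := Nat.le_mul_of_pos_left _ (by positivity)
    rw [CharTwo.add_self_eq_zero, zero_pow (by omega), mul_zero]
  rw [gPlusEval, sum_eq_zero hsummand, one_pow, add_zero, CharTwo.add_self_eq_zero]

section Field

variable {F : Type*} [Field F]

theorem pow_mul_gPlus_summand_eq {a b : F} {q0 n : ℕ} (ha0 : a ≠ 0) (hn : n ≠ 0)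
    (hab : a * b = (a ^ q0) ^ 2) (hc : (a * (1 + b)) ^ q0 = a ^ q0 + a)
    (hg : b ^ q0 * a ^ q0 = a) :
    (a * (1 + b)) ^ q0 * (b ^ (n * q0) * (1 + b) ^ (n * (q0 + 1) - q0)) =
      a ^ q0 * (a + a ^ q0 + (b ^ q0 + (b ^ q0) ^ 2)) ^ n := by
  set e := n * (q0 + 1) - q0
  set t := a + a ^ q0 + (b ^ q0 + (b ^ q0) ^ 2)
  have he : q0 + e = n * (q0 + 1) := by
    have : q0 + 1 ≤ n * (q0 + 1) := Nat.le_mul_of_pos_left _ (Nat.pos_of_ne_zero hn)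
    omega
  have hcore : (a * (1 + b)) ^ (q0 + 1) * b ^ q0 = a ^ q0 * a * t := by
    rw [pow_succ, hc, mul_add a, mul_one, hab]
    linear_combination ((a ^ q0 + a) * a ^ q0 - a * b ^ q0) * hg
  refine mul_right_cancel₀ (pow_ne_zero e ha0) ?_
  calc (a * (1 + b)) ^ q0 * (b ^ (n * q0) * (1 + b) ^ e) * a ^ e
      = (a * (1 + b)) ^ (q0 + e) * (b ^ q0) ^ n := by
        rw [pow_add, mul_pow a (1 + b) e, ← pow_mul']; ring
    _ = ((a * (1 + b)) ^ (q0 + 1) * b ^ q0) ^ n := by rw [he, mul_comm n, pow_mul, ← mul_pow]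
    _ = a ^ (q0 + e) * t ^ n := by rw [hcore, he, mul_pow, ← pow_succ, ← pow_mul, mul_comm n]
    _ = a ^ q0 * t ^ n * a ^ e := by ring

variable [CharP F 2]

theorem pow_mul_gPlusEval_eq_zero {s q0 : ℕ} {a b r : F} (hq0 : q0 = 2 ^ s) (ha0 : a ≠ 0)
    (hab : a * b = (a ^ q0) ^ 2) (hc : (a * (1 + b)) ^ q0 = a ^ q0 + a)
    (hg : b ^ q0 * a ^ q0 = a) (hr : r ^ 2 = a) (hgr : (b ^ q0) ^ q0 * r = a ^ q0)
    (htrace : ∑ i ∈ range (2 * s), a ^ 2 ^ i = 1 + r) :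
    (a * (1 + b)) ^ q0 * gPlusEval s q0 b = 0 := by
  have hsum : (a * (1 + b)) ^ q0 *
      ∑ i ∈ range s, b ^ (2 ^ i * q0) * (1 + b) ^ (2 ^ i * (q0 + 1) - q0) =
        a ^ q0 * (1 + r + (b ^ q0 + (b ^ q0) ^ q0)) := by
    have htel := sum_range_add_pow_two_pow_add_sq a (b ^ q0) s
    rw [← hq0, htrace] at htel
    rw [mul_sum, sum_congr rfl fun i _ ↦ pow_mul_gPlus_summand_eq ha0 (by positivity) hab hc hg,
      ← mul_sum, htel]
  rw [gPlusEval]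
  linear_combination hsum + (1 + b ^ q0 ^ 2) * hc + hg - (b ^ q0) ^ q0 * hr + r * hgr
    + (a + r * a ^ q0 + a ^ q0 + a ^ q0 * (b ^ q0) ^ q0) * CharTwo.two_eq_zero (R := F)

theorem gPlusEval_pow_eq_zero {s q0 : ℕ} {a : F} (hq0 : q0 = 2 ^ s)
    (ha : a ^ (2 * q0 ^ 2) = a) (htr : 1 + ∑ i ∈ range (2 * s + 1), a ^ 2 ^ i = 0) :
    gPlusEval s q0 (a ^ (2 * q0 - 1)) = 0 := by
  have ha0 : a ≠ 0 := by
    rintro rfl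
    simp at htr
  have hq0pos : 0 < q0 := hq0 ▸ by positivity
  set b := a ^ (2 * q0 - 1)
  have hab : a * b = (a ^ q0) ^ 2 := by
    rw [← pow_succ', ← pow_mul]
    congr 1
    omega
  have hg : b ^ q0 * a ^ q0 = a := by
    rw [← mul_pow, mul_comm, hab, ← pow_mul, ← pow_mul]
    convert ha using 2
    ring
  have hc : (a * (1 + b)) ^ q0 = a ^ q0 + a := by
    rw [mul_add, mul_one, hab, hq0, add_pow_char_pow, ← hq0, ← pow_mul, ← pow_mul]
    convert congrArg (a ^ q0 + ·) ha using 3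
    ring
  have hr : (a ^ q0 ^ 2) ^ 2 = a := by
    rw [← pow_mul]
    convert ha using 2
    ring
  have hgr : (b ^ q0) ^ q0 * a ^ q0 ^ 2 = a ^ q0 := by
    calc (b ^ q0) ^ q0 * a ^ q0 ^ 2 = (a * b) ^ q0 ^ 2 := by ring
      _ = (a ^ (2 * q0 ^ 2)) ^ q0 := by rw [hab]; ring
      _ = a ^ q0 := by rw [ha]
  have htrace : ∑ i ∈ range (2 * s), a ^ 2 ^ i = 1 + a ^ q0 ^ 2 := by
    rw [sum_range_pow_two_pow_of_one_add_sum_eq_zero htr, hq0, ← pow_mul, mul_comm]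
  rcases eq_or_ne b 1 with hb1 | hb1
  · rw [hb1, gPlusEval_one]
  · have hc0 : (a * (1 + b)) ^ q0 ≠ 0 := by
      refine pow_ne_zero q0 (mul_ne_zero ha0 fun h1b ↦ hb1 ?_)
      linear_combination h1b - CharTwo.two_eq_zero (R := F)
    refine (mul_eq_zero.mp ?_).resolve_left hc0
    exact pow_mul_gPlusEval_eq_zero hq0 ha0 hab hc hg hr hgr htrace

end Field

theorem stmt_4_general (s : ℕ) (q0 q : ℕ) (hq0 : q0 = 2 ^ s) (hq : q = 2 * q0 ^ 2)
    (G : Polynomial (ZMod 2))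
    (hG : G = 1 + (∑ i ∈ Finset.range s,
      X ^ (2 ^ i * q0) * (1 + X) ^ (2 ^ i * (q0 + 1) - q0)) + X ^ (q / 2))
    (F : Type*) [Field F] [Fintype F] [Algebra (ZMod 2) F]
    (hF : Fintype.card F = q) :
    ∀ a : F, 1 + (∑ i ∈ Finset.range (2 * s + 1), a ^ (2 ^ i)) = 0 →
      Polynomial.aeval (a ^ (2 * q0 - 1)) G = 0 := by
  intro a htr
  have : CharP F 2 := charP_of_injective_algebraMap (algebraMap (ZMod 2) F).injective 2
  have hq2 : q / 2 = q0 ^ 2 := by omega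
  have ha : a ^ (2 * q0 ^ 2) = a := hq ▸ hF ▸ FiniteField.pow_card a
  subst hG
  simp only [map_add, map_one, map_sum, map_mul, map_pow, aeval_X, hq2]
  exact gPlusEval_pow_eq_zero hq0 ha htr

/-- With `q₀ = 2^s`, `q = 2q₀²`, and
`G⁺(T) = 1 + Σ_{i=0}^{s-1} T^{2^i q₀}(1+T)^{2^i(q₀+1)-q₀} + T^{q/2} ∈ F₂[T]`,
for every `a ∈ F_q` of trace `1` the element `a^{2q₀-1}` is a root of `G⁺`. -/
theorem stmt_4 (s : ℕ) (hs : 1 ≤ s) (q0 q : ℕ) (hq0 : q0 = 2 ^ s) (hq : q = 2 * q0 ^ 2)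
    (G : Polynomial (ZMod 2))
    (hG : G = 1 + (∑ i ∈ Finset.range s,
      X ^ (2 ^ i * q0) * (1 + X) ^ (2 ^ i * (q0 + 1) - q0)) + X ^ (q / 2))
    (F : Type*) [Field F] [Fintype F] [Algebra (ZMod 2) F]
    (hF : Fintype.card F = q) :
    ∀ a : F, 1 + (∑ i ∈ Finset.range (2 * s + 1), a ^ (2 ^ i)) = 0 →
      Polynomial.aeval (a ^ (2 * q0 - 1)) G = 0 :=
  stmt_4_general s q0 q hq0 hq G hG F hF
end

section
/- With λ ∈ F_{q⁴} of order dividing q²+1, b as defined from λ, and μ := (1+λ)²/(bλ), one has λ² = 1 + λμb, μ^{q+1} = 1, and hence μ ∈ F_{q²}. -/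
private lemma red2 {F : Type*} [Monoid F] {x : F} {e : ℕ} (h1 : x ^ e = 1)
    (M R a c : ℕ) (h : M + e * a = R + e * c) : x ^ M = x ^ R := by
  have h2 : x ^ (M + e * a) = x ^ (R + e * c) := by rw [h]
  rwa [pow_add, pow_add, pow_mul, pow_mul, h1, one_pow, one_pow, mul_one, mul_one] at h2

private lemma main_aux {F : Type*} [Field F] {q c : ℕ} {lam b μ : F} (hb : b ≠ 0) (hl : lam ≠ 0)
    (hμ : μ = (1 + lam) ^ 2 / (b * lam))
    (hbq : b ^ q = b) (hK : (1 + lam) ^ (q + 1) = b * lam ^ c)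
    (hC : lam ^ (q + 1) = lam ^ (2 * c)) :
    μ ^ (q + 1) = 1 := by
  have hbl : (b * lam ^ c) ≠ 0 := mul_ne_zero hb (pow_ne_zero _ hl)
  have hnum : ((1 + lam) ^ 2) ^ (q + 1) = (b * lam ^ c) ^ 2 := by
    rw [← pow_mul, mul_comm 2 (q + 1), pow_mul, hK]
  have hden : (b * lam) ^ (q + 1) = (b * lam ^ c) ^ 2 := by
    rw [mul_pow, pow_succ, hbq, hC, mul_pow, ← pow_mul, mul_comm c 2]
    ring
  rw [hμ, div_pow, hnum, hden, div_self (pow_ne_zero _ hbl)]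

private lemma sq_aux {F : Type*} [Monoid F] {q : ℕ} {μ : F} (hq : 1 ≤ q)
    (h : μ ^ (q + 1) = 1) : μ ^ (q ^ 2) = μ := by
  obtain ⟨m, rfl⟩ := Nat.exists_eq_add_of_le hq
  have he : (1 + m) ^ 2 = ((1 + m + 1)) * m + 1 := by ring
  rw [he, pow_add, pow_mul, h, one_pow, pow_one, one_mul]

/-- With `λ ∈ F_{q⁴}` and `b` as in the Suzuki setting (`b ≠ 0`), and
`μ := (1+λ)²/(bλ)`, one has `λ² = 1 + λμb`, `μ^{q+1} = 1`, and `μ ∈ F_{q²}`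
(i.e. `μ^{q²} = μ`). -/
theorem stmt_6 (s : ℕ) (hs : 1 ≤ s) (q0 q : ℕ) (hq0 : q0 = 2 ^ s) (hq : q = 2 * q0 ^ 2)
    (F : Type*) [Field F] [Fintype F] (hF : Fintype.card F = q ^ 4)
    (lam b μ : F)
    (hcase :
      (lam ^ (q + 2 * q0 + 1) = 1 ∧
        b = lam ^ q0 + lam ^ (q0 + 1) + lam⁻¹ ^ q0 + lam⁻¹ ^ (q0 + 1)) ∨
      (lam ^ (q - 2 * q0 + 1) = 1 ∧
        b = lam ^ q0 + lam ^ (q0 - 1) + lam⁻¹ ^ q0 + lam⁻¹ ^ (q0 - 1)))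
    (hb : b ≠ 0) (hμ : μ = (1 + lam) ^ 2 / (b * lam)) :
    lam ^ 2 = 1 + lam * μ * b ∧ μ ^ (q + 1) = 1 ∧ μ ^ (q ^ 2) = μ := by
  -- `q0 ≥ 2`
  have hq0_2 : 2 ≤ q0 := by
    rw [hq0]
    calc 2 = 2 ^ 1 := by norm_num
    _ ≤ 2 ^ s := Nat.pow_le_pow_right (by norm_num) hs
  -- `q` is a power of `2`
  have h2s : q = 2 ^ (2 * s + 1) := by
    rw [hq, hq0, ← pow_mul]
    ring
  -- characteristic 2
  haveI : CharP F 2 := by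
    haveI := ringChar.charP F
    obtain ⟨n, hp, hcard⟩ := FiniteField.card F (ringChar F)
    have heq : ringChar F ^ (n : ℕ) = 2 ^ ((2 * s + 1) * 4) := by
      rw [← hcard, hF, h2s, ← pow_mul]
    have hdvd : ringChar F ∣ 2 ^ ((2 * s + 1) * 4) := heq ▸ dvd_pow_self _ n.pos.ne'
    have h2 : ringChar F = 2 :=
      (Nat.prime_dvd_prime_iff_eq hp Nat.prime_two).mp (hp.dvd_of_dvd_pow hdvd)
    exact h2 ▸ ringChar.charP F
  have htwo : (2 : F) = 0 := CharP.cast_eq_zero F 2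
  have hfrob : ∀ x y : F, (x + y) ^ q = x ^ q + y ^ q := by
    intro x y
    rw [h2s]
    exact add_pow_char_pow x y 2 (2 * s + 1)
  subst hq
  -- `lam ≠ 0`
  have hl : lam ≠ 0 := by
    rcases hcase with ⟨h1, -⟩ | ⟨h1, -⟩ <;>
      (intro h0; rw [h0, zero_pow (by omega)] at h1; exact zero_ne_one h1)
  -- first conjunct
  have hμb : lam * μ * b = (1 + lam) ^ 2 := by
    rw [hμ]; field_simp
  have c1 : lam ^ 2 = 1 + lam * μ * b := by
    rw [hμb]; linear_combination (-(1 : F) - lam) * htwo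
  -- second conjunct
  have c2 : μ ^ (2 * q0 ^ 2 + 1) = 1 := by
    rcases hcase with ⟨h1, hbdef⟩ | ⟨h1, hbdef⟩
    · -- case 1 : `lam ^ (q + 2q0 + 1) = 1`
      have hdinv : lam⁻¹ = lam ^ (2 * q0 ^ 2 + 2 * q0) :=
        inv_eq_of_mul_eq_one_right (by rw [← pow_succ']; exact h1)
      rw [hdinv, ← pow_mul, ← pow_mul] at hbdef
      have hbq : b ^ (2 * q0 ^ 2) = b := by
        rw [hbdef, hfrob, hfrob, hfrob, ← pow_mul, ← pow_mul, ← pow_mul, ← pow_mul,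
          red2 h1 (q0 * (2 * q0 ^ 2)) (q0 + 1) 1 q0 (by ring),
          red2 h1 ((q0 + 1) * (2 * q0 ^ 2)) ((2 * q0 ^ 2 + 2 * q0) * q0) 0 0 (by ring),
          red2 h1 ((2 * q0 ^ 2 + 2 * q0) * q0 * (2 * q0 ^ 2))
            ((2 * q0 ^ 2 + 2 * q0) * (q0 + 1)) (2 * q0) (2 * q0 ^ 3) (by ring),
          red2 h1 ((2 * q0 ^ 2 + 2 * q0) * (q0 + 1) * (2 * q0 ^ 2)) q0
            q0 (2 * q0 ^ 3 + 2 * q0 ^ 2) (by ring)]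
        ring
      have f1 : lam ^ q0 * lam ^ (2 * q0 ^ 2 + q0 + 1) = 1 := by
        rw [← pow_add, red2 h1 (q0 + (2 * q0 ^ 2 + q0 + 1)) 0 0 1 (by ring), pow_zero]
      have f2 : lam ^ (q0 + 1) * lam ^ (2 * q0 ^ 2 + q0 + 1) = lam := by
        rw [← pow_add, red2 h1 ((q0 + 1) + (2 * q0 ^ 2 + q0 + 1)) 1 0 1 (by ring), pow_one]
      have f3 : lam ^ ((2 * q0 ^ 2 + 2 * q0) * q0) * lam ^ (2 * q0 ^ 2 + q0 + 1)
          = lam ^ (2 * q0 ^ 2 + 1) := by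
        rw [← pow_add]
        exact red2 h1 ((2 * q0 ^ 2 + 2 * q0) * q0 + (2 * q0 ^ 2 + q0 + 1))
          (2 * q0 ^ 2 + 1) 0 q0 (by ring)
      have f4 : lam ^ ((2 * q0 ^ 2 + 2 * q0) * (q0 + 1)) * lam ^ (2 * q0 ^ 2 + q0 + 1)
          = lam ^ (2 * q0 ^ 2) := by
        rw [← pow_add]
        exact red2 h1 ((2 * q0 ^ 2 + 2 * q0) * (q0 + 1) + (2 * q0 ^ 2 + q0 + 1))
          (2 * q0 ^ 2) 0 (q0 + 1) (by ring)
      have hK : (1 + lam) ^ (2 * q0 ^ 2 + 1) = b * lam ^ (2 * q0 ^ 2 + q0 + 1) := by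
        rw [pow_succ, hfrob, one_pow, hbdef]
        linear_combination -f1 - f2 - f3 - f4
      have hC : lam ^ (2 * q0 ^ 2 + 1) = lam ^ (2 * (2 * q0 ^ 2 + q0 + 1)) :=
        (red2 h1 (2 * (2 * q0 ^ 2 + q0 + 1)) (2 * q0 ^ 2 + 1) 0 1 (by ring)).symm
      exact main_aux hb hl hμ hbq hK hC
    · -- case 2 : `lam ^ (q - 2q0 + 1) = 1`
      obtain ⟨p, rfl⟩ : ∃ p, q0 = p + 1 := ⟨q0 - 1, by omega⟩
      have hE : 2 * (p + 1) ^ 2 - 2 * (p + 1) + 1 = 2 * p ^ 2 + 2 * p + 1 := by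
        have h : 2 * (p + 1) ^ 2 = 2 * p ^ 2 + 4 * p + 2 := by ring
        omega
      rw [hE] at h1
      have hp1 : p + 1 - 1 = p := rfl
      rw [hp1] at hbdef
      have hdinv : lam⁻¹ = lam ^ (2 * p ^ 2 + 2 * p) :=
        inv_eq_of_mul_eq_one_right (by rw [← pow_succ']; exact h1)
      rw [hdinv, ← pow_mul, ← pow_mul] at hbdef
      have hbq : b ^ (2 * (p + 1) ^ 2) = b := by
        rw [hbdef, hfrob, hfrob, hfrob, ← pow_mul, ← pow_mul, ← pow_mul, ← pow_mul,
          red2 h1 ((p + 1) * (2 * (p + 1) ^ 2)) p 0 (p + 2) (by ring),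
          red2 h1 (p * (2 * (p + 1) ^ 2)) ((2 * p ^ 2 + 2 * p) * (p + 1)) 0 0 (by ring),
          red2 h1 ((2 * p ^ 2 + 2 * p) * (p + 1) * (2 * (p + 1) ^ 2))
            ((2 * p ^ 2 + 2 * p) * p) (2 * (p + 1)) (2 * (p + 1) ^ 3) (by ring),
          red2 h1 ((2 * p ^ 2 + 2 * p) * p * (2 * (p + 1) ^ 2)) (p + 1)
            (2 * (p + 1) ^ 2 + (p + 1)) (2 * (p + 1) ^ 3) (by ring)]
        ring
      have f1 : lam ^ (p + 1) * lam ^ (p + 1) = lam ^ (2 * (p + 1) ^ 2 + 1) := by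
        rw [← pow_add]
        exact (red2 h1 (2 * (p + 1) ^ 2 + 1) ((p + 1) + (p + 1)) 0 1 (by ring)).symm
      have f2 : lam ^ p * lam ^ (p + 1) = lam ^ (2 * (p + 1) ^ 2) := by
        rw [← pow_add]
        exact (red2 h1 (2 * (p + 1) ^ 2) (p + (p + 1)) 0 1 (by ring)).symm
      have f3 : lam ^ ((2 * p ^ 2 + 2 * p) * (p + 1)) * lam ^ (p + 1) = 1 := by
        rw [← pow_add,
          red2 h1 ((2 * p ^ 2 + 2 * p) * (p + 1) + (p + 1)) 0 0 (p + 1) (by ring), pow_zero]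
      have f4 : lam ^ ((2 * p ^ 2 + 2 * p) * p) * lam ^ (p + 1) = lam := by
        rw [← pow_add,
          red2 h1 ((2 * p ^ 2 + 2 * p) * p + (p + 1)) 1 0 p (by ring), pow_one]
      have hK : (1 + lam) ^ (2 * (p + 1) ^ 2 + 1) = b * lam ^ (p + 1) := by
        rw [pow_succ, hfrob, one_pow, hbdef]
        linear_combination -f1 - f2 - f3 - f4
      have hC : lam ^ (2 * (p + 1) ^ 2 + 1) = lam ^ (2 * (p + 1)) :=
        red2 h1 (2 * (p + 1) ^ 2 + 1) (2 * (p + 1)) 0 1 (by ring)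
      exact main_aux hb hl hμ hbq hK hC
  refine ⟨c1, c2, sq_aux (by nlinarith) c2⟩
end

section
/- Let q0 = 2^s, q = 2q0², λ ∈ F_{q⁴} with λ^{q²+1}=1, b and μ = (1+λ)²/(bλ) as above. Consider the system in T: (1) b^{q0}T^{q0} + b^{q0}T = b^{q0-1}μ + μ^{q0+1}, (2) b(T^q + T) = μ^{2q0}(μ^q + μ). Any solution z in the algebraic closure of F_q satisfies z² + z = (μ/b)². -/
theorem suzuki_endgame {K : Type*} [Field K] (two : (2:K) = 0)
    (s q0 q : ℕ) (hs : 1 ≤ s) (hq0 : q0 = 2 ^ s) (hq : q = 2 * q0 ^ 2)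
    (frob : ∀ (x y : K) (n : ℕ), (x + y) ^ 2 ^ n = x ^ 2 ^ n + y ^ 2 ^ n)
    (B M z : K) (hB : B ≠ 0)
    (hBq : B ^ q = B) (hMq : M ^ q * M = 1) (hD : B ^ (2*q0) * M = B * (1+M)^2)
    (h1 : B ^ q0 * z ^ q0 + B ^ q0 * z = B ^ (q0-1) * M + M ^ (q0+1))
    (h2 : B * (z ^ q + z) = M ^ (2*q0) * (M ^ q + M)) :
    z ^ 2 + z = (M / B) ^ 2 := by
  have hq02 : 2 ≤ q0 := by
    subst hq0; calc 2 = 2^1 := rfl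
    _ ≤ 2^s := Nat.pow_le_pow_right (by norm_num) hs
  have h2q0 : 2 * q0 = 2 ^ (s+1) := by subst hq0; rw [pow_succ]; ring
  have key : ∀ a b : K, (a + b) ^ (2*q0) = a ^ (2*q0) + b ^ (2*q0) := by
    intro a b; rw [h2q0]; exact frob a b (s+1)
  have key2 : ∀ a b : K, (a + b) ^ 2 = a ^ 2 + b ^ 2 := by
    intro a b; have := frob a b 1; simpa using this
  -- E1 : raise h1 to the 2*q0 power
  have e1 : q0 * (2*q0) = q := by subst hq; ring
  have e2' : (q0-1) * (2*q0) + 2*q0 = q := by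
    obtain ⟨k, hk⟩ : ∃ k, q0 = k + 2 := ⟨q0 - 2, by omega⟩
    have hk1 : q0 - 1 = k + 1 := by omega
    subst hq; rw [hk1, hk]; ring
  have e2 : (q0-1) * (2*q0) = q - 2*q0 := by omega
  have e3 : (q0+1) * (2*q0) = q + 2*q0 := by subst hq; ring
  have E1 : B * z ^ q + B * z ^ (2*q0)
      = B ^ (q - 2*q0) * M ^ (2*q0) + M ^ (q + 2*q0) := by
    have h := congrArg (· ^ (2*q0)) h1
    simp only [key, mul_pow, ← pow_mul] at h
    rwa [e1, e2, e3, hBq] at h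
  have E2 : B ^ (2*q0) * z ^ (2*q0) + B ^ (2*q0) * z ^ 2
      = B ^ (2*q0-2) * M ^ 2 + M ^ (2*q0+2) := by
    have h := congrArg (· ^ 2) h1
    simp only [key2, mul_pow, ← pow_mul] at h
    have f1 : q0 * 2 = 2 * q0 := by ring
    have f2 : (q0-1) * 2 = 2*q0 - 2 := by omega
    have f3 : (q0+1) * 2 = 2*q0 + 2 := by ring
    rwa [f1, f2, f3] at h
  have R1 : B ^ (q - 2*q0) * B ^ (2*q0) = B := by
    rw [← pow_add]
    have : q - 2*q0 + 2*q0 = q := by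
      have : 2*q0 ≤ q := by subst hq; nlinarith
      omega
    rw [this, hBq]
  have R2 : B ^ (2*q0-2) * B ^ 2 = B ^ (2*q0) := by
    rw [← pow_add]; congr 1; omega
  rw [div_pow, eq_div_iff (pow_ne_zero 2 hB)]
  have hX : B ^ (2*q0) ≠ 0 := pow_ne_zero _ hB
  apply mul_right_cancel₀ hX
  linear_combination (B^2) * E2 + (B * B^(2*q0)) * h2 - (B * B^(2*q0)) * E1
    + M^2 * R2 - (B * M^(2*q0)) * R1 + (M^(2*q0) * B) * hD
    + (M^(2*q0) * B^2 * M * (M+1)) * two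


theorem suzuki_case1 {F : Type*} [Field F] (two : (2:F) = 0)
    (frob : ∀ (x y : F) (n : ℕ), (x + y) ^ 2 ^ n = x ^ 2 ^ n + y ^ 2 ^ n)
    (s q0 q : ℕ) (hs : 1 ≤ s) (hq0 : q0 = 2 ^ s) (hq : q = 2 * q0 ^ 2)
    (lam b μ : F)
    (hN : lam ^ (q + 2 * q0 + 1) = 1)
    (hbdef : b = lam ^ q0 + lam ^ (q0 + 1) + lam⁻¹ ^ q0 + lam⁻¹ ^ (q0 + 1))
    (hb : b ≠ 0) (hμ : μ = (1 + lam) ^ 2 / (b * lam)) :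
    b ^ q = b ∧ μ ^ q * μ = 1 ∧ b ^ (2*q0) * μ = b * (1 + μ) ^ 2 := by
  have hq02 : 2 ≤ q0 := by
    subst hq0; calc 2 = 2^1 := rfl
    _ ≤ 2^s := Nat.pow_le_pow_right (by norm_num) hs
  have hqpow : q = 2 ^ (2*s+1) := by
    subst hq hq0; rw [← pow_mul, show 2*s+1 = s*2+1 from by ring, pow_succ']
  have h2q0pow : 2*q0 = 2 ^ (s+1) := by subst hq0; rw [pow_succ']
  have frobq : ∀ x y : F, (x+y)^q = x^q + y^q := fun x y => by
    rw [hqpow]; exact frob x y (2*s+1)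
  have frob2q0 : ∀ x y : F, (x+y)^(2*q0) = x^(2*q0) + y^(2*q0) := fun x y => by
    rw [h2q0pow]; exact frob x y (s+1)
  have hlam0 : lam ≠ 0 := by
    intro h
    rw [h, zero_pow (by omega : q + 2*q0 + 1 ≠ 0)] at hN
    exact zero_ne_one hN
  have hp0 : lam ^ q0 ≠ 0 := pow_ne_zero _ hlam0
  have hu0 : lam ^ q ≠ 0 := pow_ne_zero _ hlam0
  -- lam^q * ((lam^q0)^2 * lam) = 1
  have hL : lam^q * ((lam^q0)^2 * lam) = 1 := by
    have e : q + 2*q0 + 1 = q + (q0*2 + 1) := by ring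
    calc lam^q * ((lam^q0)^2 * lam) = lam^(q + (q0*2+1)) := by
          rw [pow_add, pow_add, pow_mul, pow_one]
    _ = 1 := by rw [← e]; exact hN
  -- (lam^q0)^q = lam^q0 * lam
  have htq : (lam^q0)^q = lam^q0 * lam := by
    have e : q0*q = (q0+1) + (q+2*q0+1)*(q0-1) := by
      obtain ⟨k, hk⟩ : ∃ k, q0 = k + 2 := ⟨q0 - 2, by omega⟩
      subst hq hk
      rw [show k+2-1 = k+1 from rfl]; ring
    rw [← pow_mul, e, pow_add, pow_mul, hN, one_pow, mul_one, pow_succ]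
  -- b in terms of lam, lam^q0
  have hbt : b * (lam^q0 * lam) = (1+lam) * (1 + (lam^q0)^2 * lam) := by
    rw [hbdef, inv_pow, inv_pow, pow_succ]
    field_simp
    ring
  -- raise hbt to the q-th power
  have Hq : b^q * (lam^q0 * lam * lam^q)
      = (1 + lam^q) * (1 + (lam^q0 * lam)^2 * lam^q) := by
    have Hraw := congrArg (· ^ q) hbt
    simp only [mul_pow] at Hraw
    rw [frobq, frobq] at Hraw
    simp only [mul_pow, one_pow] at Hraw
    linear_combination Hraw + (((lam^q0)^q)*(lam^q)^2 + ((lam^q0)^q)*(lam^q)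
      - (b^q)*(lam^q) + (lam^q)^2*(lam)*(lam^q0) + (lam^q)*(lam)*(lam^q0)) * htq
  have hbq : b ^ q = b := by
    apply mul_right_cancel₀ (show lam * lam^q0 * lam^q ≠ 0 from
      mul_ne_zero (mul_ne_zero hlam0 hp0) hu0)
    linear_combination Hq + ((lam^q)*(lam) - 1) * hL + (-(lam^q)) * hbt
  -- mu
  have hmu : μ * (b * lam) = (1+lam)^2 := by
    rw [hμ, div_mul_cancel₀ _ (mul_ne_zero hb hlam0)]
  have Hmq : μ^q * (b * lam^q) = (1 + lam^q)^2 := by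
    have h := congrArg (· ^ q) hmu
    simp only [mul_pow] at h
    rw [pow_right_comm, frobq, one_pow, hbq] at h
    linear_combination h
  have hmuq : μ ^ q * μ = 1 := by
    apply mul_right_cancel₀ (show b^2 * lam^3 * (lam^q0)^4 * lam^q ≠ 0 from
      mul_ne_zero (mul_ne_zero (mul_ne_zero (pow_ne_zero _ hb) (pow_ne_zero _ hlam0)) (pow_ne_zero _ hp0)) hu0)
    linear_combination ((μ)*(b)*(lam)^3*(lam^q0)^4) * Hmq
      + ((lam^q)^2*(lam)^2*(lam^q0)^4 + 2*(lam^q)*(lam)^2*(lam^q0)^4 + (lam)^2*(lam^q0)^4) * hmu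
      + ((lam^q)*(lam)^3*(lam^q0)^2 + 2*(lam^q)*(lam)^2*(lam^q0)^2 + (lam^q)*(lam)*(lam^q0)^2 - (b)^2*(lam)^2*(lam^q0)^2 + 2*(lam)^3*(lam^q0)^2 + 4*(lam)^2*(lam^q0)^2 + (lam)^2 + 2*(lam)*(lam^q0)^2 + 2*(lam) + 1) * hL
      + (-(b)*(lam)*(lam^q0) - (lam)^2*(lam^q0)^2 - (lam)*(lam^q0)^2 - (lam) - 1) * hbt
  -- b^(2*q0)
  have hpq : (lam^q0)^(2*q0) = lam^q := by
    rw [← pow_mul, show q0*(2*q0) = q from by subst hq; ring]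
  have hl2 : lam^(2*q0) = (lam^q0)^2 := by
    rw [mul_comm 2 q0, pow_mul]
  have HB2 : b^(2*q0) * (lam^q * (lam^q0)^2)
      = (1 + (lam^q0)^2) * (1 + (lam^q)^2 * (lam^q0)^2) := by
    have HB2raw := congrArg (· ^ (2*q0)) hbt
    simp only [mul_pow] at HB2raw
    rw [frob2q0, frob2q0] at HB2raw
    simp only [mul_pow, one_pow] at HB2raw
    linear_combination HB2raw
      + (((lam^q0)^(2*q0))*(lam^(2*q0))^2 + ((lam^q0)^(2*q0))*(lam^(2*q0)) + (lam^(2*q0))^2*(lam^q) - (lam^(2*q0))*(b^(2*q0)) + (lam^(2*q0))*(lam^q)) * hpq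
      + ((lam^(2*q0))*(lam^q)^2 - (b^(2*q0))*(lam^q) + (lam^q)^2*(lam^q0)^2 + (lam^q)^2 + 1) * hl2
  have hD : b^(2*q0) * μ = b * (1+μ)^2 := by
    apply mul_right_cancel₀ (show b^2 * lam^3 * (lam^q0)^4 * lam^q ≠ 0 from
      mul_ne_zero (mul_ne_zero (mul_ne_zero (pow_ne_zero _ hb) (pow_ne_zero _ hlam0)) (pow_ne_zero _ hp0)) hu0)
    linear_combination ((μ)*(b)^2*(lam)^3*(lam^q0)^2) * HB2
      + (-(μ)*(lam^q)*(b)^2*(lam)^2*(lam^q0)^4 + (lam^q)^2*(b)*(lam)^2*(lam^q0)^6 + (lam^q)^2*(b)*(lam)^2*(lam^q0)^4 - 2*(lam^q)*(b)^2*(lam)^2*(lam^q0)^4 - (lam^q)*(b)*(lam)^3*(lam^q0)^4 - 2*(lam^q)*(b)*(lam)^2*(lam^q0)^4 - (lam^q)*(b)*(lam)*(lam^q0)^4 + (b)*(lam)^2*(lam^q0)^4 + (b)*(lam)^2*(lam^q0)^2) * hmu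
      + ((lam^q)*(b)*(lam)^3*(lam^q0)^4 + (lam^q)*(b)*(lam)^3*(lam^q0)^2 + 2*(lam^q)*(b)*(lam)^2*(lam^q0)^4 + 2*(lam^q)*(b)*(lam)^2*(lam^q0)^2 + (lam^q)*(b)*(lam)*(lam^q0)^4 + (lam^q)*(b)*(lam)*(lam^q0)^2 - (b)^3*(lam)^2*(lam^q0)^2 - 2*(b)^2*(lam)^3*(lam^q0)^2 - 4*(b)^2*(lam)^2*(lam^q0)^2 - 2*(b)^2*(lam)*(lam^q0)^2 - (b)*(lam)^4*(lam^q0)^2 - 4*(b)*(lam)^3*(lam^q0)^2 - 5*(b)*(lam)^2*(lam^q0)^2 + (b)*(lam)^2 - 2*(b)*(lam)*(lam^q0)^2 + 2*(b)*(lam) + (b)) * hL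
      + (-(b)^2*(lam)*(lam^q0) - (b)*(lam)^2*(lam^q0)^2 - 2*(b)*(lam)^2*(lam^q0) - (b)*(lam)*(lam^q0)^2 - 4*(b)*(lam)*(lam^q0) - (b)*(lam) - 2*(b)*(lam^q0) - (b) - 2*(lam)^3*(lam^q0)^2 - 6*(lam)^2*(lam^q0)^2 - 4*(lam)^2*(lam^q0) - 2*(lam)^2 - 6*(lam)*(lam^q0)^2 - 8*(lam)*(lam^q0) - 6*(lam) - 2*(lam^q0)^2 - 4*(lam^q0) - 6) * hbt
      + (-(b)*(lam^q0) - (lam)^5*(lam^q0)^4 - 4*(lam)^4*(lam^q0)^4 - 2*(lam)^4*(lam^q0)^3 - 2*(lam)^4*(lam^q0)^2 - 6*(lam)^3*(lam^q0)^4 - 6*(lam)^3*(lam^q0)^3 - 8*(lam)^3*(lam^q0)^2 - 2*(lam)^3*(lam^q0) - (lam)^3 - 4*(lam)^2*(lam^q0)^4 - 6*(lam)^2*(lam^q0)^3 - 12*(lam)^2*(lam^q0)^2 - 6*(lam)^2*(lam^q0) - 4*(lam)^2 - (lam)*(lam^q0)^4 - 2*(lam)*(lam^q0)^3 - 7*(lam)*(lam^q0)^2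 - 6*(lam)*(lam^q0) - 6*(lam) - (lam^q0)^2 - 2*(lam^q0) - 3) * two
  exact ⟨hbq, hmuq, hD⟩


theorem suzuki_case2 {F : Type*} [Field F] (two : (2:F) = 0)
    (frob : ∀ (x y : F) (n : ℕ), (x + y) ^ 2 ^ n = x ^ 2 ^ n + y ^ 2 ^ n)
    (s q0 q : ℕ) (hs : 1 ≤ s) (hq0 : q0 = 2 ^ s) (hq : q = 2 * q0 ^ 2)
    (lam b μ : F)
    (hN : lam ^ (q - 2 * q0 + 1) = 1)
    (hbdef : b = lam ^ q0 + lam ^ (q0 - 1) + lam⁻¹ ^ q0 + lam⁻¹ ^ (q0 - 1))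
    (hb : b ≠ 0) (hμ : μ = (1 + lam) ^ 2 / (b * lam)) :
    b ^ q = b ∧ μ ^ q * μ = 1 ∧ b ^ (2*q0) * μ = b * (1 + μ) ^ 2 := by
  have hq02 : 2 ≤ q0 := by
    subst hq0; calc 2 = 2^1 := rfl
    _ ≤ 2^s := Nat.pow_le_pow_right (by norm_num) hs
  have h2q0le : 2*q0 ≤ q := by subst hq; nlinarith
  have hqpow : q = 2 ^ (2*s+1) := by
    subst hq hq0; rw [← pow_mul, show 2*s+1 = s*2+1 from by ring, pow_succ']
  have h2q0pow : 2*q0 = 2 ^ (s+1) := by subst hq0; rw [pow_succ']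
  have frobq : ∀ x y : F, (x+y)^q = x^q + y^q := fun x y => by
    rw [hqpow]; exact frob x y (2*s+1)
  have frob2q0 : ∀ x y : F, (x+y)^(2*q0) = x^(2*q0) + y^(2*q0) := fun x y => by
    rw [h2q0pow]; exact frob x y (s+1)
  have hlam0 : lam ≠ 0 := by
    intro h
    rw [h, zero_pow (by omega : q - 2*q0 + 1 ≠ 0)] at hN
    exact zero_ne_one hN
  have hp0 : lam ^ q0 ≠ 0 := pow_ne_zero _ hlam0
  have hu0 : lam ^ q ≠ 0 := pow_ne_zero _ hlam0
  have hL : lam^q * lam = (lam^q0)^2 := by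
    have e : q + 1 = q0*2 + (q - 2*q0 + 1) := by omega
    calc lam^q * lam = lam^(q+1) := by rw [pow_succ]
    _ = (lam^q0)^2 := by rw [e, pow_add, hN, mul_one, pow_mul]
  have htq : (lam^q0)^q * lam = lam^q0 := by
    have e : q0*q + 1 = q0 + (q - 2*q0 + 1)*(q0+1) := by
      obtain ⟨k, hk⟩ : ∃ k, q0 = k + 2 := ⟨q0 - 2, by omega⟩
      subst hq hk
      have h1 : 2*(k+2)^2 - 2*(k+2) + 1 = 2*k^2+6*k+5 := by
        have : (k+2)^2 = k^2+4*k+4 := by ring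
        omega
      rw [h1]; ring
    calc (lam^q0)^q * lam = lam^(q0*q+1) := by rw [← pow_mul, pow_succ]
    _ = lam^q0 := by rw [e, pow_add, pow_mul, hN, one_pow, mul_one]
  have hbt : b * (lam^q0 * lam) = (1+lam) * ((lam^q0)^2 + lam) := by
    have hr : lam^(q0-1) = lam^q0 * lam⁻¹ := by
      rw [eq_mul_inv_iff_mul_eq₀ hlam0, ← pow_succ]
      congr 1; omega
    rw [hbdef, inv_pow, inv_pow, hr]
    field_simp
    ring
  have Hq : b^q * (lam^q0 * lam^q * lam)
      = (1 + lam^q) * ((lam^q0)^2 + lam^q * lam^2) := by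
    have Hraw := congrArg (· ^ q) hbt
    simp only [mul_pow] at Hraw
    rw [frobq, frobq] at Hraw
    simp only [mul_pow, one_pow] at Hraw
    linear_combination (lam^2) * Hraw + (((lam^q0)^q)*(lam^q)*(lam) + ((lam^q0)^q)*(lam)
      - (b^q)*(lam^q)*(lam) + (lam^q)*(lam^q0) + (lam^q0)) * htq
  have hbq : b ^ q = b := by
    apply mul_right_cancel₀ (show lam^2 * lam^q0 * lam^q ≠ 0 from
      mul_ne_zero (mul_ne_zero (pow_ne_zero _ hlam0) hp0) hu0)
    linear_combination ((lam)) * Hq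
      + ((lam^q)*(lam)^2 - (b)*(lam)*(lam^q0) + (lam)^2 + (lam)*(lam^q0)^2 + (lam^q0)^2) * hL
      + (-(lam^q0)^2) * hbt
  have hmu : μ * (b * lam) = (1+lam)^2 := by
    rw [hμ, div_mul_cancel₀ _ (mul_ne_zero hb hlam0)]
  have Hmq : μ^q * (b * lam^q) = (1 + lam^q)^2 := by
    have h := congrArg (· ^ q) hmu
    simp only [mul_pow] at h
    rw [pow_right_comm, frobq, one_pow, hbq] at h
    linear_combination h
  have hmuq : μ ^ q * μ = 1 := by
    apply mul_right_cancel₀ (show b^2 * lam^3 * lam^q ≠ 0 from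
      mul_ne_zero (mul_ne_zero (pow_ne_zero _ hb) (pow_ne_zero _ hlam0)) hu0)
    linear_combination ((μ)*(b)*(lam)^3) * Hmq
      + ((lam^q)^2*(lam)^2 + 2*(lam^q)*(lam)^2 + (lam)^2) * hmu
      + ((lam^q)*(lam)^3 + 2*(lam^q)*(lam)^2 + (lam^q)*(lam) - (b)^2*(lam)^2 + 2*(lam)^3 + (lam)^2*(lam^q0)^2 + 4*(lam)^2 + 2*(lam)*(lam^q0)^2 + 2*(lam) + (lam^q0)^2) * hL
      + (-(b)*(lam)*(lam^q0) - (lam)^2 - (lam)*(lam^q0)^2 - (lam) - (lam^q0)^2) * hbt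
  have hpq : (lam^q0)^(2*q0) = lam^q := by
    rw [← pow_mul, show q0*(2*q0) = q from by subst hq; ring]
  have hl2 : lam^(2*q0) = (lam^q0)^2 := by
    rw [mul_comm 2 q0, pow_mul]
  have HB2 : b^(2*q0) * (lam^q * (lam^q0)^2)
      = (1 + (lam^q0)^2) * ((lam^q)^2 + (lam^q0)^2) := by
    have HB2raw := congrArg (· ^ (2*q0)) hbt
    simp only [mul_pow] at HB2raw
    rw [frob2q0, frob2q0] at HB2raw
    simp only [mul_pow, one_pow] at HB2raw
    linear_combination HB2raw
      + (((lam^q0)^(2*q0))*(lam^(2*q0)) + ((lam^q0)^(2*q0)) - (lam^(2*q0))*(b^(2*q0)) + (lam^(2*q0))*(lam^q) + (lam^q)) * hpq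
      + ((lam^(2*q0)) - (b^(2*q0))*(lam^q) + (lam^q)^2 + (lam^q0)^2 + 1) * hl2
  have hD : b^(2*q0) * μ = b * (1+μ)^2 := by
    apply mul_right_cancel₀ (show b^2 * lam^3 * (lam^q0)^2 * lam^q ≠ 0 from
      mul_ne_zero (mul_ne_zero (mul_ne_zero (pow_ne_zero _ hb) (pow_ne_zero _ hlam0)) (pow_ne_zero _ hp0)) hu0)
    linear_combination ((μ)*(b)^2*(lam)^3) * HB2
      + (-(μ)*(lam^q)*(b)^2*(lam)^2*(lam^q0)^2 + (lam^q)^2*(b)*(lam)^2*(lam^q0)^2 + (lam^q)^2*(b)*(lam)^2 - 2*(lam^q)*(b)^2*(lam)^2*(lam^q0)^2 - (lam^q)*(b)*(lam)^3*(lam^q0)^2 - 2*(lam^q)*(b)*(lam)^2*(lam^q0)^2 - (lam^q)*(b)*(lam)*(lam^q0)^2 + (b)*(lam)^2*(lam^q0)^4 + (b)*(lam)^2*(lam^q0)^2) * hmu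
      + ((lam^q)*(b)*(lam)^3*(lam^q0)^2 + (lam^q)*(b)*(lam)^3 + 2*(lam^q)*(b)*(lam)^2*(lam^q0)^2 + 2*(lam^q)*(b)*(lam)^2 + (lam^q)*(b)*(lam)*(lam^q0)^2 + (lam^q)*(b)*(lam) - (b)^3*(lam)^2*(lam^q0)^2 - 2*(b)^2*(lam)^3*(lam^q0)^2 - 4*(b)^2*(lam)^2*(lam^q0)^2 - 2*(b)^2*(lam)*(lam^q0)^2 - (b)*(lam)^4*(lam^q0)^2 - 4*(b)*(lam)^3*(lam^q0)^2 + (b)*(lam)^2*(lam^q0)^4 - 5*(b)*(lam)^2*(lam^q0)^2 + 2*(b)*(lam)*(lam^q0)^4 - 2*(b)*(lam)*(lam^q0)^2 + (b)*(lam^q0)^4) * hL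
      + (-(b)^2*(lam)*(lam^q0)^3 - 2*(b)*(lam)^2*(lam^q0)^3 - (b)*(lam)^2*(lam^q0)^2 - (b)*(lam)*(lam^q0)^4 - 4*(b)*(lam)*(lam^q0)^3 - (b)*(lam)*(lam^q0)^2 - (b)*(lam^q0)^4 - 2*(b)*(lam^q0)^3 - 2*(lam)^3*(lam^q0)^2 - 2*(lam)^2*(lam^q0)^4 - 4*(lam)^2*(lam^q0)^3 - 6*(lam)^2*(lam^q0)^2 - 6*(lam)*(lam^q0)^4 - 8*(lam)*(lam^q0)^3 - 6*(lam)*(lam^q0)^2 - 6*(lam^q0)^4 - 4*(lam^q0)^3 - 2*(lam^q0)^2) * hbt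
      + (-(b)*(lam^q0)^5 - (lam)^5*(lam^q0)^2 - 2*(lam)^4*(lam^q0)^4 - 2*(lam)^4*(lam^q0)^3 - 4*(lam)^4*(lam^q0)^2 - (lam)^3*(lam^q0)^6 - 2*(lam)^3*(lam^q0)^5 - 8*(lam)^3*(lam^q0)^4 - 6*(lam)^3*(lam^q0)^3 - 6*(lam)^3*(lam^q0)^2 - 4*(lam)^2*(lam^q0)^6 - 6*(lam)^2*(lam^q0)^5 - 12*(lam)^2*(lam^q0)^4 - 6*(lam)^2*(lam^q0)^3 - 4*(lam)^2*(lam^q0)^2 - 6*(lam)*(lam^q0)^6 - 6*(lam)*(lam^q0)^5 - 7*(lam)*(lam^q0)^4 - 2*(lam)*(lam^q0)^3 - (lam)*(lam^q0)^2 - 3*(lam^q0)^6 - 2*(lam^q0)^5 - (lam^q0)^4) * two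
  exact ⟨hbq, hmuq, hD⟩


/-- With `λ ∈ F_{q⁴}`, `b` and `μ = (1+λ)²/(bλ)` as in the Suzuki setting,
any `z` in the algebraic closure of `F_q` satisfying
`b^{q₀}z^{q₀} + b^{q₀}z = b^{q₀-1}μ + μ^{q₀+1}` and `b(z^q + z) = μ^{2q₀}(μ^q + μ)`
also satisfies `z² + z = (μ/b)²`. -/
theorem stmt_7 (s : ℕ) (hs : 1 ≤ s) (q0 q : ℕ) (hq0 : q0 = 2 ^ s) (hq : q = 2 * q0 ^ 2)
    (F : Type*) [Field F] [Fintype F] (hF : Fintype.card F = q ^ 4)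
    (lam b μ : F)
    (hcase :
      (lam ^ (q + 2 * q0 + 1) = 1 ∧
        b = lam ^ q0 + lam ^ (q0 + 1) + lam⁻¹ ^ q0 + lam⁻¹ ^ (q0 + 1)) ∨
      (lam ^ (q - 2 * q0 + 1) = 1 ∧
        b = lam ^ q0 + lam ^ (q0 - 1) + lam⁻¹ ^ q0 + lam⁻¹ ^ (q0 - 1)))
    (hb : b ≠ 0) (hμ : μ = (1 + lam) ^ 2 / (b * lam))
    (z : AlgebraicClosure F)
    (h1 : (algebraMap F (AlgebraicClosure F) b) ^ q0 * z ^ q0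
        + (algebraMap F (AlgebraicClosure F) b) ^ q0 * z
        = (algebraMap F (AlgebraicClosure F) b) ^ (q0 - 1) * algebraMap F (AlgebraicClosure F) μ
          + (algebraMap F (AlgebraicClosure F) μ) ^ (q0 + 1))
    (h2 : algebraMap F (AlgebraicClosure F) b * (z ^ q + z)
        = (algebraMap F (AlgebraicClosure F) μ) ^ (2 * q0)
          * ((algebraMap F (AlgebraicClosure F) μ) ^ q + algebraMap F (AlgebraicClosure F) μ)) :
    z ^ 2 + z
      = (algebraMap F (AlgebraicClosure F) μ / algebraMap F (AlgebraicClosure F) b) ^ 2 := by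
  obtain ⟨p, hp⟩ := CharP.exists F
  haveI := hp
  obtain ⟨n, hprime, hcard⟩ := FiniteField.card F p
  have hp2 : p = 2 := by
    have h1' : p ∣ 2 ^ (8*s+4) := by
      have h4 : q ^ 4 = 2 ^ (8*s+4) := by
        subst hq hq0
        rw [mul_pow, ← pow_mul, ← pow_mul, ← pow_add]
        congr 1; ring
      rw [hF, h4] at hcard
      rw [hcard]
      exact dvd_pow_self p (by positivity)
    have := hprime.dvd_of_dvd_pow h1'
    exact (Nat.prime_dvd_prime_iff_eq hprime Nat.prime_two).mp this
  subst hp2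
  haveI : Fact (Nat.Prime 2) := ⟨Nat.prime_two⟩
  have twoF : (2:F) = 0 := by exact_mod_cast CharP.cast_eq_zero F 2
  have frobF : ∀ (x y : F) (n : ℕ), (x + y) ^ 2 ^ n = x ^ 2 ^ n + y ^ 2 ^ n :=
    fun x y n => add_pow_char_pow x y 2 n
  have key : b ^ q = b ∧ μ ^ q * μ = 1 ∧ b ^ (2*q0) * μ = b * (1 + μ) ^ 2 := by
    rcases hcase with ⟨hN, hbdef⟩ | ⟨hN, hbdef⟩
    · exact suzuki_case1 twoF frobF s q0 q hs hq0 hq lam b μ hN hbdef hb hμ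
    · exact suzuki_case2 twoF frobF s q0 q hs hq0 hq lam b μ hN hbdef hb hμ
  obtain ⟨hbq, hmuq, hD⟩ := key
  have twoK : (2 : AlgebraicClosure F) = 0 := by
    exact_mod_cast CharP.cast_eq_zero (AlgebraicClosure F) 2
  have frobK : ∀ (x y : AlgebraicClosure F) (n : ℕ),
      (x + y) ^ 2 ^ n = x ^ 2 ^ n + y ^ 2 ^ n :=
    fun x y n => add_pow_char_pow x y 2 n
  set φ := algebraMap F (AlgebraicClosure F) with hφ
  have hB : φ b ≠ 0 := fun h => hb (φ.injective (by rw [h, map_zero]))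
  have hBq : (φ b) ^ q = φ b := by rw [← map_pow, hbq]
  have hMq : (φ μ) ^ q * (φ μ) = 1 := by rw [← map_pow, ← map_mul, hmuq, map_one]
  have hDK : (φ b) ^ (2*q0) * (φ μ) = φ b * (1 + φ μ) ^ 2 := by
    have h := congrArg φ hD
    simpa [map_mul, map_pow, map_add, map_one] using h
  exact suzuki_endgame twoK s q0 q hs hq0 hq frobK (φ b) (φ μ) z hB hBq hMq hDK h1 h2
end

section
/- Let q0 = 2^s, q = 2q0², and let T̄ be the Sylow 2-subgroup of Sz(q) of order q² with center Z(T̄) = {ψ_{0,c}} of order q. If U ≤ T̄ has order 2^u and its subgroup U₂ of elements of order ≤ 2 has order 2^v, then u ≤ 2v. -/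
/-!
In characteristic 2 we have `ψ_{a,c}² = ψ_{0, a^{2q₀+1}}`, so `ψ_{a,c}` has order at most 2 exactly
when `a = 0`. Hence `ψ_{a,c} ↦ a` is a homomorphism from `U` to `(F, +)` with kernel `U₂`, and
`|U| = |A| · |U₂|` for its image `A`. Squaring maps `U` into `U₂`, and `a ↦ a^{2q₀+1}` is injective
on `F` because `gcd(2q₀ + 1, q - 1) = 1`; so `a ↦ ψ_{0, a^{2q₀+1}}` embeds `A` into `U₂`.
-/

/-- The map `ψ_{a,c} : (x, y) ↦ (x + a, a^{2q₀} x + y + c)`, an element of the Sylow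
2-subgroup `T̄` of the Suzuki group acting on `F × F`. -/
def suzukiPsi {F : Type*} [Field F] (q0 : ℕ) (a c : F) : Equiv.Perm (F × F) where
  toFun p := (p.1 + a, a ^ (2 * q0) * p.1 + p.2 + c)
  invFun p := (p.1 - a, p.2 - a ^ (2 * q0) * (p.1 - a) - c)
  left_inv p := by
    refine Prod.ext ?_ ?_ <;> dsimp <;> ring
  right_inv p := by
    refine Prod.ext ?_ ?_ <;> dsimp <;> ring

theorem Nat.coprime_two_mul_sq_sub_one_two_mul_add_one (m : ℕ) :
    (2 * m ^ 2 - 1).Coprime (2 * m + 1) := by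
  rcases m with _ | m
  · norm_num
  rw [← Nat.isCoprime_iff_coprime]
  -- `(2m + 1)(2m - 1) = 2(2m² - 1) + 1`
  refine ⟨-2, 2 * (m + 1) - 1, ?_⟩
  push_cast [Nat.one_le_iff_ne_zero.mpr (by positivity : 2 * (m + 1) ^ 2 ≠ 0),
    Nat.one_le_iff_ne_zero.mpr (by positivity : 2 * (m + 1) ≠ 0)]
  ring

theorem FiniteField.pow_injective_of_coprime {F : Type*} [Field F] [Fintype F] {m : ℕ}
    (hm0 : m ≠ 0) (hm : (Fintype.card F - 1).Coprime m) :
    Function.Injective fun x : F => x ^ m := by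
  intro a b hab
  simp only at hab
  have hzero : a = 0 ↔ b = 0 := by
    rw [← pow_eq_zero_iff hm0, hab, pow_eq_zero_iff hm0]
  by_cases ha : a = 0
  · rw [ha, hzero.mp ha]
  have hb : b ≠ 0 := mt hzero.mpr ha
  have hunits : (Nat.card Fˣ).Coprime m := by
    rwa [Nat.card_units, Nat.card_eq_fintype_card]
  have := hunits.pow_left_bijective.injective (a₁ := Units.mk0 a ha) (a₂ := Units.mk0 b hb)
    (Units.ext (by simpa using hab))
  simpa using congrArg Units.val this

theorem FiniteField.charP_two_of_even_card {F : Type*} [Field F] [Fintype F]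
    (h : Even (Fintype.card F)) : CharP F 2 :=
  ringChar.of_eq (even_card_iff_char_two.mpr (Nat.even_iff.mp h))

section Psi

variable {F : Type*} [Field F] {q0 : ℕ}

theorem suzukiPsi_apply (a c : F) (p : F × F) :
    suzukiPsi q0 a c p = (p.1 + a, a ^ (2 * q0) * p.1 + p.2 + c) := rfl

theorem suzukiPsi_apply_zero (a c : F) : suzukiPsi q0 a c (0, 0) = (a, c) := by
  simp [suzukiPsi_apply]

theorem suzukiPsi_mul_apply_zero (a c a' c' : F) :
    (suzukiPsi q0 a c * suzukiPsi q0 a' c') (0, 0) = (a + a', a ^ (2 * q0) * a' + c + c') := by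
  simp only [Equiv.Perm.mul_apply, suzukiPsi_apply]
  ext <;> ring

theorem suzukiPsi_zero_zero (hq0 : q0 ≠ 0) : suzukiPsi q0 (0 : F) 0 = 1 := by
  ext p <;> simp [suzukiPsi_apply, hq0]

theorem suzukiPsi_sq [CharP F 2] (hq0 : q0 ≠ 0) (a c : F) :
    suzukiPsi q0 a c ^ 2 = suzukiPsi q0 0 (a ^ (2 * q0 + 1)) := by
  ext p
  · simp [pow_two, suzukiPsi_apply, add_assoc, CharTwo.add_self_eq_zero]
  · simp only [pow_two, Equiv.Perm.mul_apply, suzukiPsi_apply,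
      zero_pow (mul_ne_zero two_ne_zero hq0), zero_mul, zero_add]
    linear_combination (a ^ (2 * q0) * p.1 + c) * CharTwo.two_eq_zero (R := F)

theorem suzukiPsi_sq_eq_one_iff [CharP F 2] (hq0 : q0 ≠ 0) (a c : F) :
    suzukiPsi q0 a c ^ 2 = 1 ↔ a = 0 := by
  rw [suzukiPsi_sq hq0]
  constructor
  · intro h
    have := congrArg Prod.snd (congrArg (· (0, 0)) h)
    simpa [suzukiPsi_apply_zero] using this
  · rintro rfl
    simpa using suzukiPsi_zero_zero hq0

end Psi

section Subgroup

variable {F : Type*} [Field F] {q0 : ℕ} {U : Subgroup (Equiv.Perm (F × F))}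

def suzukiFstHom (hU : ∀ g ∈ U, ∃ a c : F, g = suzukiPsi q0 a c) : U →* Multiplicative F where
  toFun g := .ofAdd (g.1 (0, 0)).1
  map_one' := rfl
  map_mul' g h := by
    obtain ⟨a, c, hg⟩ := hU g g.2
    obtain ⟨a', c', hh⟩ := hU h h.2
    simp only [Subgroup.coe_mul, hg, hh, suzukiPsi_mul_apply_zero, suzukiPsi_apply_zero, ofAdd_add]

@[simp]
theorem suzukiFstHom_apply (hU : ∀ g ∈ U, ∃ a c : F, g = suzukiPsi q0 a c) (g : U) :
    suzukiFstHom hU g = .ofAdd (g.1 (0, 0)).1 := rfl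

theorem mem_ker_suzukiFstHom_iff [CharP F 2] (hq0 : q0 ≠ 0)
    (hU : ∀ g ∈ U, ∃ a c : F, g = suzukiPsi q0 a c) (g : U) :
    g ∈ (suzukiFstHom hU).ker ↔ g.1 ^ 2 = 1 := by
  obtain ⟨a, c, hg⟩ := hU g g.2
  simp [hg, suzukiPsi_apply_zero, suzukiPsi_sq_eq_one_iff hq0]

theorem card_ker_suzukiFstHom [CharP F 2] (hq0 : q0 ≠ 0)
    (hU : ∀ g ∈ U, ∃ a c : F, g = suzukiPsi q0 a c) :
    Nat.card (suzukiFstHom hU).ker = Nat.card {g : Equiv.Perm (F × F) // g ∈ U ∧ g ^ 2 = 1} :=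
  Nat.card_congr <| (Equiv.subtypeEquivRight (mem_ker_suzukiFstHom_iff hq0 hU)).trans
    (Equiv.subtypeSubtypeEquivSubtypeInter (· ∈ U) (· ^ 2 = 1))

theorem card_range_suzukiFstHom_le [Finite F] [CharP F 2] (hq0 : q0 ≠ 0)
    (hU : ∀ g ∈ U, ∃ a c : F, g = suzukiPsi q0 a c)
    (hinj : Function.Injective fun x : F => x ^ (2 * q0 + 1)) :
    Nat.card (suzukiFstHom hU).range ≤ Nat.card {g : Equiv.Perm (F × F) // g ∈ U ∧ g ^ 2 = 1} := by
  have hmem (x : (suzukiFstHom hU).range) :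
      suzukiPsi q0 0 (x.1.toAdd ^ (2 * q0 + 1)) ∈ U := by
    obtain ⟨g, hgx⟩ := x.2
    obtain ⟨a, c, hg⟩ := hU g g.2
    have hxa : x.1.toAdd = a := by simp [← hgx, hg, suzukiPsi_apply_zero]
    rw [hxa, ← suzukiPsi_sq hq0 a c, ← hg]
    exact pow_mem g.2 2
  refine Nat.card_le_card_of_injective (fun x => ⟨_, hmem x, ?_⟩) fun x y hxy => ?_
  · rw [suzukiPsi_sq_eq_one_iff hq0]
  · have hc := congrArg (fun g : {g // g ∈ U ∧ g ^ 2 = 1} => (g.1 (0, 0)).2) hxy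
    simp only [suzukiPsi_apply_zero] at hc
    exact Subtype.ext (Multiplicative.toAdd.injective (hinj hc))

theorem card_le_card_sq_eq_one_sq [Finite F] [CharP F 2] (hq0 : q0 ≠ 0)
    (hU : ∀ g ∈ U, ∃ a c : F, g = suzukiPsi q0 a c)
    (hinj : Function.Injective fun x : F => x ^ (2 * q0 + 1)) :
    Nat.card U ≤ Nat.card {g : Equiv.Perm (F × F) // g ∈ U ∧ g ^ 2 = 1} ^ 2 := by
  rw [← (suzukiFstHom hU).ker.card_mul_index, Subgroup.index_ker, card_ker_suzukiFstHom hq0 hU,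
    pow_two]
  exact Nat.mul_le_mul_left _ (card_range_suzukiFstHom_le hq0 hU hinj)

end Subgroup

theorem stmt_15_general (q0 q : ℕ) (hq : q = 2 * q0 ^ 2)
    (F : Type*) [Field F] [Fintype F] (hF : Fintype.card F = q)
    (U : Subgroup (Equiv.Perm (F × F)))
    (hUT : ∀ g ∈ U, ∃ a c : F, g = suzukiPsi q0 a c)
    (u v : ℕ)
    (hu : Nat.card U = 2 ^ u)
    (hv : Nat.card {g : Equiv.Perm (F × F) // g ∈ U ∧ g ^ 2 = 1} = 2 ^ v) :
    u ≤ 2 * v := by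
  subst hq
  have hq0 : q0 ≠ 0 := by
    rintro rfl
    exact Fintype.card_ne_zero (hF.trans (by norm_num))
  have : CharP F 2 := FiniteField.charP_two_of_even_card (hF ▸ even_two_mul _)
  have hinj : Function.Injective fun x : F => x ^ (2 * q0 + 1) :=
    FiniteField.pow_injective_of_coprime (by omega)
      (hF ▸ Nat.coprime_two_mul_sq_sub_one_two_mul_add_one q0)
  have hle := card_le_card_sq_eq_one_sq hq0 hUT hinj
  rw [hu, hv, ← pow_mul, mul_comm] at hle
  exact (Nat.pow_le_pow_iff_right one_lt_two).mp hle

/-- If `U` is a subgroup of the Sylow 2-subgroup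
`T̄ = {ψ_{a,c} : a, c ∈ F_q}` of `Sz(q)` of order `2^u`, and its subgroup of elements of
order at most 2 has order `2^v`, then `u ≤ 2v`. -/
theorem stmt_15 (s : ℕ) (hs : 1 ≤ s) (q0 q : ℕ) (hq0 : q0 = 2 ^ s) (hq : q = 2 * q0 ^ 2)
    (F : Type*) [Field F] [Fintype F] (hF : Fintype.card F = q)
    (U : Subgroup (Equiv.Perm (F × F)))
    (hUT : ∀ g ∈ U, ∃ a c : F, g = suzukiPsi q0 a c)
    (u v : ℕ)
    (hu : Nat.card U = 2 ^ u)
    (hv : Nat.card {g : Equiv.Perm (F × F) // g ∈ U ∧ g ^ 2 = 1} = 2 ^ v) :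
    u ≤ 2 * v :=
  stmt_15_general q0 q hq F hF U hUT u v hu hv
end
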